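/- arXiv:1707.04310 — 6 statements merged into one kernel-verified Lean document; each statement's English description precedes it below -/
import Mathlib

section
/- Let A be an alphabet, let K and K' be languages over A, let n ∈ ℕ, and let f be a word over A such that for every word v over A with |v| = n, v ∈ K if and only if (v ⧢ f) ∩ K' ≠ ∅. Then for every tuple (w₁, …, wₘ) of words over A whose total length Σᵢ |wᵢ| equals n, we have ⧢(w₁, …, wₘ) ∩ K ≠ ∅ if and only if ⧢(w₁, …, wₘ, f) ∩ K' ≠ ∅. -/
/-!
Shuffling never changes total length, so every word of `⧢(w₁, …, wₘ)` has length
`n = Σ |wᵢ|`. Since `⧢(w₁, …, wₘ, f)` is the union of the sets `v ⧢ f` over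
`v ∈ ⧢(w₁, …, wₘ)`, it meets `K'` exactly when some such `v` has `(v ⧢ f) ∩ K' ≠ ∅`,
which by the hypothesis on `f` at length `n` means `v ∈ K`.
-/

namespace CTS

/-- Shuffle of two words: `ε ⧢ v = {v}`, `u ⧢ ε = {u}`,
`(x·u) ⧢ (y·v) = x·(u ⧢ y·v) ∪ y·(x·u ⧢ v)`. -/
def shuffle {α : Type*} : List α → List α → Set (List α)
  | [], v => {v}
  | u, [] => {u}
  | x :: u, y :: v =>
      (List.cons x) '' shuffle u (y :: v) ∪ (List.cons y) '' shuffle (x :: u) v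
  termination_by u v => u.length + v.length

/-- Shuffle of a tuple of words: `⧢() = {ε}` and
`⧢(w₁, …, wₘ₊₁) = ⋃_{v ∈ ⧢(w₁, …, wₘ)} v ⧢ wₘ₊₁`. -/
def Shuffles {α : Type*} (ws : List (List α)) : Set (List α) :=
  ws.foldl (fun S w => ⋃ v ∈ S, shuffle v w) {[]}

/-- `wpow u n` is the `n`-fold concatenation `u^n` of the word `u`. -/
def wpow {α : Type*} (u : List α) : ℕ → List α
  | 0 => []
  | n + 1 => u ++ wpow u n

/-- `star u = {u^n : n ∈ ℕ}`. -/
def star {α : Type*} (u : List α) : Set (List α) := {w | ∃ n, w = wpow u n}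

/-- Words that are (possibly empty) concatenations of blocks from `S`. -/
def ConcatsOf {α : Type*} (S : Set (List α)) : Set (List α) :=
  {w | ∃ L : List (List α), (∀ u ∈ L, u ∈ S) ∧ w = L.flatten}

section

variable {α : Type*}

theorem length_eq_of_mem_shuffle {u v w : List α} (h : w ∈ shuffle u v) :
    w.length = u.length + v.length := by
  induction u, v using shuffle.induct generalizing w with
  | case1 v => simp_all [shuffle]
  | case2 u hu => cases u <;> simp_all [shuffle]
  | case3 x u y v ih₁ ih₂ =>
    rw [shuffle] at h
    rcases h with ⟨w', hw', rfl⟩ | ⟨w', hw', rfl⟩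
    · simp only [List.length_cons, ih₁ hw']
      omega
    · simp only [List.length_cons, ih₂ hw']
      omega

@[simp]
theorem Shuffles_nil : Shuffles ([] : List (List α)) = {[]} := rfl

theorem Shuffles_append_singleton (ws : List (List α)) (f : List α) :
    Shuffles (ws ++ [f]) = ⋃ v ∈ Shuffles ws, shuffle v f := by
  simp [Shuffles, List.foldl_append]

theorem length_eq_of_mem_Shuffles {ws : List (List α)} {w : List α}
    (h : w ∈ Shuffles ws) : w.length = (ws.map List.length).sum := by
  induction ws using List.reverseRecOn generalizing w with
  | nil => simp_all
  | append_singleton ws f ih =>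
    rw [Shuffles_append_singleton, Set.mem_iUnion₂] at h
    obtain ⟨v, hv, hw⟩ := h
    simp [length_eq_of_mem_shuffle hw, ih hv]

theorem Shuffles_append_singleton_inter_nonempty_iff (ws : List (List α)) (f : List α)
    (K' : Set (List α)) :
    (Shuffles (ws ++ [f]) ∩ K').Nonempty ↔ ∃ v ∈ Shuffles ws, (shuffle v f ∩ K').Nonempty := by
  simp only [Shuffles_append_singleton, Set.iUnion_inter, Set.nonempty_iUnion, exists_prop]

end

/-- if `f` is a filter word for `K` and `K'` at length `n`, then for every
tuple of words of total length `n`, the tuple has a shuffle in `K` iff the tuple extended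
by `f` has a shuffle in `K'`. -/
theorem stmt0 {α : Type*} (K K' : Set (List α)) (n : ℕ) (f : List α)
    (hf : ∀ v : List α, v.length = n → (v ∈ K ↔ (shuffle v f ∩ K').Nonempty)) :
    ∀ ws : List (List α), (ws.map List.length).sum = n →
      ((Shuffles ws ∩ K).Nonempty ↔ (Shuffles (ws ++ [f]) ∩ K').Nonempty) := by
  intro ws hn
  rw [Shuffles_append_singleton_inter_nonempty_iff]
  refine exists_congr fun v => and_congr_right fun hv => ?_
  exact hf v ((length_eq_of_mem_Shuffles hv).trans hn)

end CTS
end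

section
/- Let A be an alphabet, let u be a word over A, and let w = u^k for some k ∈ ℕ. Then every factor z of w (i.e., every word z such that w = p·z·s for some words p, s) with |z| = |u| satisfies |z|_c = |u|_c for every letter c ∈ A. -/
namespace CTS

/-!
A factor `z` of `u^k` with `|z| = |u|` is a conjugate of `u`: if the factor starts inside a
copy `u = p q` of `u`, then it reads `q` up to the end of that copy and then `p` from the start
of the next one, so `z = q p`. Conjugate words are permutations of each other.
-/

section

variable {α : Type*}

theorem exists_eq_append_of_append_eq_append {a b c d : List α} (h : a ++ b = c ++ d)
    (hle : a.length ≤ c.length) : ∃ e, c = a ++ e ∧ b = e ++ d := by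
  obtain ⟨e, rfl⟩ :=
    List.prefix_of_prefix_length_le (List.prefix_append a b) (h ▸ List.prefix_append c d) hle
  exact ⟨e, rfl, by simpa using h⟩

theorem wpow_prefix_wpow_succ (u : List α) : ∀ k, wpow u k <+: wpow u (k + 1)
  | 0 => List.nil_prefix
  | k + 1 => (List.prefix_append_right_inj u).2 (wpow_prefix_wpow_succ u k)

theorem isRotated_of_append_eq_wpow {u z s : List α} {k : ℕ} :
    ∀ {p : List α}, p ++ z ++ s = wpow u k → z.length = u.length → z ~r u := by
  induction k with
  | zero =>
    intro p h hz
    obtain ⟨-, rfl, -⟩ : p = [] ∧ z = [] ∧ s = [] := by simpa [wpow] using h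
    rw [List.eq_nil_of_length_eq_zero hz.symm]
  | succ k ih =>
    intro p h hz
    rw [List.append_assoc] at h
    rcases le_or_gt u.length p.length with hup | hpu
    · obtain ⟨p', rfl, hp'⟩ := exists_eq_append_of_append_eq_append h.symm hup
      exact ih (by rw [List.append_assoc, hp']) hz
    · obtain ⟨q, rfl, hzs⟩ := exists_eq_append_of_append_eq_append h hpu.le
      obtain ⟨r, rfl, hrs⟩ :=
        exists_eq_append_of_append_eq_append hzs.symm (by simp at hz; omega)
      obtain ⟨t, ht⟩ := (List.prefix_append r s).trans (hrs ▸ wpow_prefix_wpow_succ _ k)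
      -- `r` and `p` are prefixes of equal length of `u^(k+1)`, since `u^k <+: u^(k+1)`.
      have hrp : r = p := List.append_inj_left (ht.trans h.symm) (by simp at hz; omega)
      exact hrp ▸ List.isRotated_append

end

/-- every factor of `u^k` of length `|u|` has the same number of occurrences
of every letter as `u` does. -/
theorem stmt5 {α : Type*} [DecidableEq α] (u : List α) (k : ℕ) (w : List α)
    (hw : w = wpow u k) :
    ∀ p z s : List α, w = p ++ z ++ s → z.length = u.length →
      ∀ c : α, z.count c = u.count c := by
  intro p z s hsplit hlen c
  exact (isRotated_of_append_eq_wpow (hw ▸ hsplit).symm hlen).perm.count_eq c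

end CTS
end

section
/- Let A be an alphabet, n ∈ ℕ, let A₁, …, A_{n+2} be subsets of A, and let a₁, …, a_{n+1} be pairwise distinct letters of A with aᵢ ∉ Aⱼ for all i, j. Let K be the monomial A₁^* a₁ A₂^* a₂ ⋯ a_{n+1} A_{n+2}^* and K' the monomial A₁^* a₁ A₂^* ⋯ a_n A_{n+1}^*. Let (V, ≤, ℓ) be a finite A-labeled DAG such that for each 1 ≤ i ≤ n+1 there is exactly one vertex vᵢ with ℓ(vᵢ) = aᵢ. Let V' = {u ∈ V : u ≤ vᵢ for some 1 ≤ i ≤ n} ∪ {u ∈ V : u < v_{n+1}} ∪ {u ∈ V : u ≤ w for some w ∈ V incomparable to v_{n+1} with ℓ(w) ∉ A_{n+2}}, with the induced order and labeling. Then V has a topological sort achieving a word of K if and only if both: every z ∈ V with v_{n+1} < z satisfies ℓ(z) ∈ A_{n+2}, and V' has a topological sort achieving a word of K'. -/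
namespace CTS

/-- A topological sort of the finite partial order `V`: a duplicate-free list containing
every element, such that whenever `u < v`, `u` occurs before `v`. -/
def IsTopSort {V : Type*} [PartialOrder V] (σ : List V) : Prop :=
  σ.Nodup ∧ (∀ v : V, v ∈ σ) ∧ σ.Pairwise (fun u v => ¬ v < u)

/-- The monomial language `A₁^* a₁ A₂^* a₂ ⋯ aₘ A_{m+1}^*`, given by the list of
subalphabets and the list of pivot letters. -/
def monomialLang {α : Type*} : List (Set α) → List α → Set (List α)
  | [A0], [] => {w | ∀ c ∈ w, c ∈ A0}
  | A0 :: As, c :: cs =>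
      {w | ∃ p r, (∀ d ∈ p, d ∈ A0) ∧ r ∈ monomialLang As cs ∧ w = p ++ c :: r}
  | _, _ => ∅


/-!
In a topological sort of `V` achieving a word of `K`, the vertex `v_{n+1}` splits the sort as
`σ₁ v_{n+1} σ₂`, where `σ₁` achieves a word of `K'` and `σ₂` uses only letters of `A_{n+2}`.
The vertices of `σ₁` form a lower set containing `v₁, …, vₙ`, the strict predecessors of
`v_{n+1}` and every vertex incomparable to `v_{n+1}` whose label is not in `A_{n+2}`; hence it
contains `V'`, and restricting `σ₁` to `V'` deletes letters but no pivot, so the word stays in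
`K'`. Conversely, `V'` is a lower set avoiding `v_{n+1}`, so a sort of `V'`, then `v_{n+1}`, then
any sort of the remaining vertices is a topological sort of `V`; each remaining vertex lies
above `v_{n+1}` or is incomparable to it with label in `A_{n+2}`.
-/

section Monomial

variable {α : Type*}

theorem mem_monomialLang_cons {X : Set α} {L : List (Set α)} {c : α} {cs : List α}
    {w : List α} :
    w ∈ monomialLang (X :: L) (c :: cs) ↔
      ∃ p r, (∀ d ∈ p, d ∈ X) ∧ r ∈ monomialLang L cs ∧ w = p ++ c :: r := by
  rw [monomialLang]; rfl

theorem monomialLang_eq_empty {L : List (Set α)} {cs : List α}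
    (h₁ : ∀ X, L = [X] → cs = [] → False)
    (h₂ : ∀ X L' c cs', L = X :: L' → cs = c :: cs' → False) :
    monomialLang L cs = ∅ := by
  rw [monomialLang.eq_def]
  split
  · exact (h₁ _ rfl rfl).elim
  · exact (h₂ _ _ _ _ rfl rfl).elim
  · rfl

theorem mem_or_exists_mem_of_mem_monomialLang {L : List (Set α)} {cs w : List α}
    (hw : w ∈ monomialLang L cs) {d : α} (hd : d ∈ w) : d ∈ cs ∨ ∃ X ∈ L, d ∈ X := by
  induction L, cs using monomialLang.induct generalizing w with
  | case1 X => exact .inr ⟨X, List.mem_singleton_self X, hw d hd⟩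
  | case2 X L c cs ih =>
    obtain ⟨p, r, hp, hr, rfl⟩ := mem_monomialLang_cons.mp hw
    rcases List.mem_append.mp hd with hd | hd | ⟨_, hd⟩
    · exact .inr ⟨X, List.mem_cons_self, hp d hd⟩
    · exact .inl List.mem_cons_self
    · rcases ih hr hd with hd | ⟨Y, hY, hdY⟩
      · exact .inl (List.mem_cons_of_mem c hd)
      · exact .inr ⟨Y, List.mem_cons_of_mem X hY, hdY⟩
  | case3 L cs h₁ h₂ => simp [monomialLang_eq_empty h₁ h₂] at hw

theorem mem_monomialLang_of_sublist {L : List (Set α)} {cs w w' : List α}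
    (hw : w ∈ monomialLang L cs) (hsub : w'.Sublist w) (hcs : cs.Nodup)
    (hdisj : ∀ c ∈ cs, ∀ X ∈ L, c ∉ X) (hpiv : ∀ c ∈ cs, c ∈ w') :
    w' ∈ monomialLang L cs := by
  induction L, cs using monomialLang.induct generalizing w w' with
  | case1 X => exact fun d hd => hw d (hsub.subset hd)
  | case2 X L c cs ih =>
    obtain ⟨p, r, hp, hr, rfl⟩ := mem_monomialLang_cons.mp hw
    obtain ⟨p', r', rfl, hp', hr'⟩ := List.sublist_append_iff.mp hsub
    have hcX : c ∉ X := hdisj c List.mem_cons_self X List.mem_cons_self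
    have hc_r : c ∉ r := fun h => by
      rcases mem_or_exists_mem_of_mem_monomialLang hr h with h | ⟨Y, hY, hcY⟩
      · exact (List.nodup_cons.mp hcs).1 h
      · exact hdisj c List.mem_cons_self Y (List.mem_cons_of_mem X hY) hcY
    rcases List.sublist_cons_iff.mp hr' with hr' | ⟨r'', rfl, hr''⟩
    · rcases List.mem_append.mp (hpiv c List.mem_cons_self) with h | h
      · exact (hcX (hp c (hp'.subset h))).elim
      · exact (hc_r (hr'.subset h)).elim
    refine mem_monomialLang_cons.mpr ⟨p', r'', fun d hd => hp d (hp'.subset hd), ?_, rfl⟩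
    refine ih hr hr'' (List.nodup_cons.mp hcs).2
      (fun d hd Y hY => hdisj d (List.mem_cons_of_mem c hd) Y (List.mem_cons_of_mem X hY))
      fun d hd => ?_
    have hdX : d ∉ X := hdisj d (List.mem_cons_of_mem c hd) X List.mem_cons_self
    rcases List.mem_append.mp (hpiv d (List.mem_cons_of_mem c hd)) with h | h | ⟨_, h⟩
    · exact (hdX (hp d (hp'.subset h))).elim
    · exact ((List.nodup_cons.mp hcs).1 hd).elim
    · exact h
  | case3 L cs h₁ h₂ => simp [monomialLang_eq_empty h₁ h₂] at hw

theorem mem_monomialLang_append_singleton {L : List (Set α)} {cs : List α}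
    (hL : L.length = cs.length + 1) {X : Set α} {c : α} {w : List α} :
    w ∈ monomialLang (L ++ [X]) (cs ++ [c]) ↔
      ∃ p r, p ∈ monomialLang L cs ∧ (∀ d ∈ r, d ∈ X) ∧ w = p ++ c :: r := by
  induction cs generalizing L w with
  | nil =>
    obtain ⟨Y, rfl⟩ := List.length_eq_one_iff.mp hL
    exact mem_monomialLang_cons
  | cons c' cs ih =>
    obtain ⟨Y, L, rfl⟩ := List.exists_cons_of_length_eq_add_one hL
    simp only [List.cons_append, mem_monomialLang_cons]
    constructor
    · rintro ⟨p, r, hp, hr, rfl⟩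
      obtain ⟨p', r', hp', hr', rfl⟩ := (ih (by simpa using hL)).mp hr
      exact ⟨p ++ c' :: p', r', ⟨p, p', hp, hp', rfl⟩, hr', by simp⟩
    · rintro ⟨p, r, ⟨q, p', hq, hp', rfl⟩, hr, rfl⟩
      exact ⟨q, p' ++ c :: r, hq, (ih (by simpa using hL)).mpr ⟨p', r, hp', hr, rfl⟩, by simp⟩

theorem mem_monomialLang_ofFn_succ {n : ℕ} (As : Fin (n + 2) → Set α) (as : Fin (n + 1) → α)
    {w : List α} :
    w ∈ monomialLang (List.ofFn As) (List.ofFn as) ↔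
      ∃ p r, p ∈ monomialLang (List.ofFn fun i : Fin (n + 1) => As i.castSucc)
          (List.ofFn fun i : Fin n => as i.castSucc) ∧
        (∀ d ∈ r, d ∈ As (Fin.last (n + 1))) ∧ w = p ++ as (Fin.last n) :: r := by
  rw [List.ofFn_succ' As, List.ofFn_succ' as, List.concat_eq_append, List.concat_eq_append]
  exact mem_monomialLang_append_singleton (by simp)

end Monomial

section TopSort

variable {V : Type*} [PartialOrder V]

def IsTopSortOn (s : Set V) (l : List V) : Prop :=
  l.Nodup ∧ (∀ v, v ∈ l ↔ v ∈ s) ∧ l.Pairwise (fun u v => ¬ v < u)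

theorem isTopSort_iff_isTopSortOn_univ {σ : List V} : IsTopSort σ ↔ IsTopSortOn Set.univ σ := by
  simp [IsTopSort, IsTopSortOn]

theorem isTopSort_subtype_iff {s : Set V} {σ : List s} :
    IsTopSort σ ↔ IsTopSortOn s (σ.map Subtype.val) := by
  simp only [IsTopSort, IsTopSortOn, List.nodup_map_iff Subtype.val_injective, List.pairwise_map,
    Subtype.coe_lt_coe, List.mem_map, Subtype.forall]
  constructor
  · rintro ⟨hnd, hall, hpw⟩
    exact ⟨hnd, fun v => ⟨fun ⟨u, _, hu⟩ => hu ▸ u.2, fun hv => ⟨_, hall v hv, rfl⟩⟩, hpw⟩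
  · rintro ⟨hnd, hall, hpw⟩
    refine ⟨hnd, fun v hv => ?_, hpw⟩
    obtain ⟨u, hu, rfl⟩ := (hall v).mpr hv
    exact hu

theorem exists_isTopSort_subtype {s : Set V} {l : List V} (h : IsTopSortOn s l) :
    ∃ σ : List s, IsTopSort σ ∧ σ.map Subtype.val = l := by
  lift l to List s using fun v hv => (h.2.1 v).mp hv
  exact ⟨l, isTopSort_subtype_iff.mpr h, rfl⟩

theorem exists_isTopSort [Finite V] : ∃ σ : List V, IsTopSort σ := by
  classical
  have := Fintype.ofFinite V
  obtain ⟨r, hr, hle⟩ := extend_partialOrder ((· ≤ ·) : V → V → Prop)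
  let σ := List.insertionSort r Finset.univ.toList
  have hperm : σ.Perm Finset.univ.toList := List.perm_insertionSort r _
  refine ⟨σ, hperm.nodup_iff.mpr (Finset.nodup_toList _), fun v => hperm.mem_iff.mpr (by simp),
    (List.pairwise_insertionSort r _).imp fun hab hba => ?_⟩
  exact hba.ne (hr.antisymm _ _ (hle _ _ hba.le) hab)

theorem exists_isTopSortOn [Finite V] (s : Set V) : ∃ l : List V, IsTopSortOn s l := by
  obtain ⟨σ, hσ⟩ := exists_isTopSort (V := s)
  exact ⟨_, isTopSort_subtype_iff.mp hσ⟩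

theorem isTopSortOn_singleton (v : V) : IsTopSortOn {v} [v] := by
  simp [IsTopSortOn]

theorem IsTopSortOn.append {s t : Set V} {l₁ l₂ : List V} (h₁ : IsTopSortOn s l₁)
    (h₂ : IsTopSortOn t l₂) (hst : Disjoint s t) (hlt : ∀ a ∈ s, ∀ b ∈ t, ¬ b < a) :
    IsTopSortOn (s ∪ t) (l₁ ++ l₂) := by
  refine ⟨List.nodup_append.mpr ⟨h₁.1, h₂.1, ?_⟩, fun v => ?_,
    List.pairwise_append.mpr ⟨h₁.2.2, h₂.2.2, ?_⟩⟩
  · rintro a ha b hb rfl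
    exact hst.notMem_of_mem_left ((h₁.2.1 a).mp ha) ((h₂.2.1 a).mp hb)
  · simp [h₁.2.1 v, h₂.2.1 v]
  · exact fun a ha b hb => hlt a ((h₁.2.1 a).mp ha) b ((h₂.2.1 b).mp hb)

theorem IsTopSortOn.filter {s t : Set V} {l : List V} [DecidablePred (· ∈ t)]
    (h : IsTopSortOn s l) (hts : t ⊆ s) : IsTopSortOn t (l.filter (· ∈ t)) := by
  refine ⟨h.1.filter _, fun v => ?_, h.2.2.filter _⟩
  simpa [h.2.1 v] using fun hv => hts hv

theorem IsTopSort.isTopSortOn_left {l₁ l₂ : List V} (h : IsTopSort (l₁ ++ l₂)) :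
    IsTopSortOn {v | v ∈ l₁} l₁ :=
  ⟨(List.nodup_append.mp h.1).1, fun _ => Iff.rfl, (List.pairwise_append.mp h.2.2).1⟩

theorem IsTopSort.isLowerSet_left {l₁ l₂ : List V} (h : IsTopSort (l₁ ++ l₂)) :
    IsLowerSet {v | v ∈ l₁} := by
  intro a b hba ha
  rcases hba.eq_or_lt with rfl | hlt
  · exact ha
  rcases List.mem_append.mp (h.2.1 b) with hb | hb
  · exact hb
  · exact ((List.pairwise_append.mp h.2.2).2.2 a ha b hb hlt).elim

end TopSort

section InductiveStep

variable {A V : Type*} [PartialOrder V] {n : ℕ}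

/-- The vertex set `V'` of the inductive step. -/
def reducedSet (As : Fin (n + 2) → Set A) (ℓ : V → A) (vs : Fin (n + 1) → V) : Set V :=
  {u | ∃ i : Fin n, u ≤ vs i.castSucc} ∪ {u | u < vs (Fin.last n)} ∪
    {u | ∃ w : V, ¬ w ≤ vs (Fin.last n) ∧ ¬ vs (Fin.last n) ≤ w ∧
      ℓ w ∉ As (Fin.last (n + 1)) ∧ u ≤ w}

variable {As : Fin (n + 2) → Set A} {as : Fin (n + 1) → A} {ℓ : V → A} {vs : Fin (n + 1) → V}

theorem isLowerSet_reducedSet : IsLowerSet (reducedSet As ℓ vs) := by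
  rintro x y hyx ((⟨i, hx⟩ | hx) | ⟨w, hwv, hvw, hwB, hx⟩)
  · exact .inl (.inl ⟨i, hyx.trans hx⟩)
  · exact .inl (.inr (hyx.trans_lt hx))
  · exact .inr ⟨w, hwv, hvw, hwB, hyx.trans hx⟩

theorem mem_of_notMem_reducedSet (hup : ∀ z, vs (Fin.last n) < z → ℓ z ∈ As (Fin.last (n + 1)))
    {z : V} (hz : z ∉ reducedSet As ℓ vs) (hzv : z ≠ vs (Fin.last n)) :
    ℓ z ∈ As (Fin.last (n + 1)) := by
  by_cases hvz : vs (Fin.last n) ≤ z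
  · exact hup z (hvz.lt_of_ne' hzv)
  by_cases hzv' : z ≤ vs (Fin.last n)
  · exact (hz (.inl (.inr (hzv'.lt_of_ne hzv)))).elim
  by_contra hzB
  exact hz (.inr ⟨z, hzv', hvz, hzB, le_rfl⟩)

theorem castSucc_ne_last_of_injective (hdist : Function.Injective as) (i : Fin n) :
    as i.castSucc ≠ as (Fin.last n) :=
  hdist.ne (Fin.castSucc_lt_last i).ne

theorem exists_isTopSort_reducedSet_of_isTopSort (hdist : Function.Injective as)
    (hnotin : ∀ i j, as i ∉ As j) (hvs : ∀ i, ℓ (vs i) = as i) {σp σr : List V}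
    (hσ : IsTopSort (σp ++ vs (Fin.last n) :: σr))
    (hp : σp.map ℓ ∈ monomialLang (List.ofFn fun i : Fin (n + 1) => As i.castSucc)
      (List.ofFn fun i : Fin n => as i.castSucc))
    (hr : ∀ z ∈ σr, ℓ z ∈ As (Fin.last (n + 1))) :
    (∀ z, vs (Fin.last n) < z → ℓ z ∈ As (Fin.last (n + 1))) ∧
      ∃ σ' : List (reducedSet As ℓ vs), IsTopSort σ' ∧
        σ'.map (fun u => ℓ u.val) ∈ monomialLang (List.ofFn fun i : Fin (n + 1) => As i.castSucc)
          (List.ofFn fun i : Fin n => as i.castSucc) := by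
  classical
  have hlower := hσ.isLowerSet_left
  have hlower' : IsLowerSet {v | v ∈ σp ++ [vs (Fin.last n)]} :=
    IsTopSort.isLowerSet_left (l₂ := σr) (by simpa using hσ)
  have hlabel : ∀ x, x ∉ σp → x ≠ vs (Fin.last n) → ℓ x ∈ As (Fin.last (n + 1)) := by
    intro x hxp hxv
    rcases List.mem_append.mp (hσ.2.1 x) with h | h | ⟨_, h⟩
    exacts [(hxp h).elim, (hxv rfl).elim, hr x h]
  have hpiv : ∀ i : Fin n, vs i.castSucc ∈ σp := fun i => by
    by_contra h
    refine hnotin i.castSucc (Fin.last (n + 1)) (hvs _ ▸ hlabel _ h fun hv => ?_)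
    exact castSucc_ne_last_of_injective hdist i (by rw [← hvs, hv, hvs])
  have hsub : reducedSet As ℓ vs ⊆ {v | v ∈ σp} := by
    rintro u ((⟨i, hu⟩ | hu) | ⟨w, hwv, _, hwB, hu⟩)
    · exact hlower hu (hpiv i)
    · simpa [hu.ne] using hlower' hu.le (by simp)
    · exact hlower hu (by_contra fun h => hwB (hlabel w h fun hw => hwv hw.le))
  refine ⟨fun z hvz => hlabel z (fun hz => ?_) hvz.ne', ?_⟩
  · have hv := hlower hvz.le hz
    exact (List.nodup_append.mp hσ.1).2.2 _ hv _ List.mem_cons_self rfl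
  obtain ⟨σ', hσ', hval⟩ := exists_isTopSort_subtype (hσ.isTopSortOn_left.filter hsub)
  refine ⟨σ', hσ', ?_⟩
  rw [show σ'.map (fun u => ℓ u.val) = (σ'.map Subtype.val).map ℓ by simp, hval]
  refine mem_monomialLang_of_sublist hp ((List.filter_sublist).map ℓ)
    (List.nodup_ofFn.mpr fun i j h => Fin.castSucc_injective n (hdist h)) ?_ ?_
  · simp only [List.mem_ofFn]
    rintro _ ⟨i, rfl⟩ _ ⟨j, rfl⟩
    exact hnotin _ _
  · simp only [List.mem_ofFn]
    rintro _ ⟨i, rfl⟩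
    exact List.mem_map.mpr ⟨vs i.castSucc,
      List.mem_filter.mpr ⟨hpiv i, decide_eq_true (.inl (.inl ⟨i, le_rfl⟩))⟩, hvs _⟩

theorem exists_isTopSort_of_isTopSort_reducedSet [Finite V] (hdist : Function.Injective as)
    (hnotin : ∀ i j, as i ∉ As j) (hvs : ∀ i, ℓ (vs i) = as i)
    (hup : ∀ z, vs (Fin.last n) < z → ℓ z ∈ As (Fin.last (n + 1)))
    {σ' : List (reducedSet As ℓ vs)} (hσ' : IsTopSort σ')
    (hw : σ'.map (fun u => ℓ u.val) ∈ monomialLang (List.ofFn fun i : Fin (n + 1) => As i.castSucc)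
      (List.ofFn fun i : Fin n => as i.castSucc)) :
    ∃ σ : List V, IsTopSort σ ∧ σ.map ℓ ∈ monomialLang (List.ofFn As) (List.ofFn as) := by
  have hvS : vs (Fin.last n) ∉ reducedSet As ℓ vs := fun h => by
    rcases mem_or_exists_mem_of_mem_monomialLang hw (List.mem_map_of_mem (hσ'.2.1 ⟨_, h⟩))
      with hv | ⟨X, hX, hvX⟩
    · obtain ⟨i, hi⟩ := List.mem_ofFn.mp hv
      exact castSucc_ne_last_of_injective hdist i (hi.trans (hvs _))
    · obtain ⟨j, rfl⟩ := List.mem_ofFn.mp hX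
      exact hnotin _ _ (hvs _ ▸ hvX)
  set R := {u | u ∉ reducedSet As ℓ vs ∧ u ≠ vs (Fin.last n)}
  obtain ⟨τ, hτ⟩ := exists_isTopSortOn R
  have hvτ : IsTopSortOn ({vs (Fin.last n)} ∪ R) (vs (Fin.last n) :: τ) :=
    (isTopSortOn_singleton _).append hτ (by simp [R])
      fun a ha b hb hba => hb.1 (.inl (.inr ((Set.mem_singleton_iff.mp ha) ▸ hba)))
  have hout : ∀ b ∈ {vs (Fin.last n)} ∪ R, b ∉ reducedSet As ℓ vs := by
    rintro b (rfl | hb)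
    exacts [hvS, hb.1]
  have hall := (isTopSort_subtype_iff.mp hσ').append hvτ
    (Set.disjoint_left.mpr fun u hu hu' => hout u hu' hu)
    fun a ha b hb hba => hout b hb (isLowerSet_reducedSet hba.le ha)
  have huniv : reducedSet As ℓ vs ∪ ({vs (Fin.last n)} ∪ R) = Set.univ := by
    ext u
    by_cases u ∈ reducedSet As ℓ vs <;> by_cases u = vs (Fin.last n) <;> simp_all [R]
  refine ⟨_, isTopSort_iff_isTopSortOn_univ.mpr (huniv ▸ hall),
    (mem_monomialLang_ofFn_succ As as).mpr ⟨_, τ.map ℓ, by simpa using hw, ?_, by simp [hvs]⟩⟩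
  simp only [List.mem_map]
  rintro _ ⟨z, hz, rfl⟩
  exact mem_of_notMem_reducedSet hup ((hτ.2.1 z).mp hz).1 ((hτ.2.1 z).mp hz).2

end InductiveStep

/-- correctness of the inductive step for monomials. -/
theorem stmt8 {A V : Type*} [Fintype V] [PartialOrder V]
    (n : ℕ) (As : Fin (n + 2) → Set A) (as : Fin (n + 1) → A)
    (hdist : Function.Injective as)
    (hnotin : ∀ i j, as i ∉ As j)
    (ℓ : V → A)
    (vs : Fin (n + 1) → V)
    (hvs : ∀ i, ℓ (vs i) = as i)
    (huniq : ∀ i (v : V), ℓ v = as i → v = vs i) :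
    (∃ σ : List V, IsTopSort σ ∧
        σ.map ℓ ∈ monomialLang (List.ofFn As) (List.ofFn as)) ↔
      ((∀ z : V, vs (Fin.last n) < z → ℓ z ∈ As (Fin.last (n + 1))) ∧
        ∃ σ' : List ({u : V // u ∈
            ({u | ∃ i : Fin n, u ≤ vs i.castSucc} ∪ {u | u < vs (Fin.last n)} ∪
              {u | ∃ w : V, ¬ w ≤ vs (Fin.last n) ∧ ¬ vs (Fin.last n) ≤ w ∧
                ℓ w ∉ As (Fin.last (n + 1)) ∧ u ≤ w} : Set V)}),
          IsTopSort σ' ∧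
            σ'.map (fun u => ℓ u.val) ∈
              monomialLang (List.ofFn fun i : Fin (n + 1) => As i.castSucc)
                (List.ofFn fun i : Fin n => as i.castSucc)) := by
  constructor
  · rintro ⟨σ, hσ, hw⟩
    obtain ⟨p, r, hp, hr, heq⟩ := (mem_monomialLang_ofFn_succ As as).mp hw
    obtain ⟨σp, σ₂, rfl, rfl, hσ₂⟩ := List.map_eq_append_iff.mp heq
    obtain ⟨x, σr, rfl, hx, rfl⟩ := List.map_eq_cons_iff.mp hσ₂
    obtain rfl := huniq _ x hx
    exact exists_isTopSort_reducedSet_of_isTopSort hdist hnotin hvs hσ hp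
      fun z hz => hr _ (List.mem_map_of_mem hz)
  · rintro ⟨hup, σ', hσ', hw⟩
    exact exists_isTopSort_of_isTopSort_reducedSet hdist hnotin hvs hup hσ' hw

end CTS
end

section
/- Let N be a finite commutative monoid and ω ≥ 1 an integer such that p^{2ω} = p^ω for every p ∈ N. Call an element p ∈ N fully recurrent if there exist elements s₁, …, s_k that generate N as a monoid and integers r₁, …, r_k ≥ ω such that p = s₁^{r₁} ⋯ s_k^{r_k}. Let H be a finite group and let τ be a relational morphism from N to H, i.e., a map τ : N → 𝒫(H) such that τ(m) is nonempty for every m ∈ N and τ(m)·τ(m') ⊆ τ(m·m') for all m, m' ∈ N, where S·S' = {g·g' : g ∈ S, g' ∈ S'}. Then for all fully recurrent elements p, q of N, the sets τ(p) and τ(q) have the same cardinality. -/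
/-!
A fully recurrent `q` absorbs every `ω`-th power: `q * m ^ ω = q`. Hence every `p` divides it,
`q = q * p ^ ω = p * (q * p ^ (ω - 1))`, so two fully recurrent elements divide each other.
Along divisibility `|τ m| ≤ |τ (m * m')|`, since `τ m` embeds into `τ (m * m')` by right
multiplication with any element of `τ m'`.
-/

open scoped Pointwise

namespace CTS

/-- An element `p` of a commutative monoid is fully recurrent (with respect to the
idempotent power `ω`) if it can be written as `s₁^{r₁} ⋯ s_k^{r_k}` where the `sᵢ`
generate the monoid and all exponents satisfy `rᵢ ≥ ω`. -/
def FullyRecurrent {N : Type*} [CommMonoid N] (ω : ℕ) (p : N) : Prop :=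
  ∃ (k : ℕ) (s : Fin k → N) (r : Fin k → ℕ),
    Submonoid.closure (Set.range s) = ⊤ ∧ (∀ i, ω ≤ r i) ∧ p = ∏ i, s i ^ r i

lemma pow_add_eq_pow_of_pow_two_mul {M : Type*} [Monoid M] {x : M} {ω r : ℕ}
    (hx : x ^ (2 * ω) = x ^ ω) (hr : ω ≤ r) : x ^ (r + ω) = x ^ r := by
  obtain ⟨c, rfl⟩ := Nat.exists_eq_add_of_le hr
  rw [show ω + c + ω = 2 * ω + c by omega, pow_add, hx, ← pow_add]

namespace FullyRecurrent

variable {N : Type*} [CommMonoid N] {ω : ℕ}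

lemma mul_pow_eq_self (hidem : ∀ x : N, x ^ (2 * ω) = x ^ ω) {p : N}
    (hp : FullyRecurrent ω p) (m : N) : p * m ^ ω = p := by
  obtain ⟨k, s, r, hgen, hr, rfl⟩ := hp
  have hm : m ∈ Submonoid.closure (Set.range s) := hgen ▸ Submonoid.mem_top m
  induction hm using Submonoid.closure_induction with
  | mem x hx =>
    obtain ⟨i, rfl⟩ := hx
    rw [← Finset.prod_erase_mul _ _ (Finset.mem_univ i), mul_assoc, ← pow_add,
      pow_add_eq_pow_of_pow_two_mul (hidem _) (hr i)]
  | one => rw [one_pow, mul_one]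
  | mul x y _ _ hx hy => rw [mul_pow, ← mul_assoc, hx, hy]

lemma dvd (hω : 1 ≤ ω) (hidem : ∀ x : N, x ^ (2 * ω) = x ^ ω) {q : N}
    (hq : FullyRecurrent ω q) (p : N) : p ∣ q := by
  refine ⟨q * p ^ (ω - 1), ?_⟩
  calc q = q * p ^ ω := (hq.mul_pow_eq_self hidem p).symm
    _ = q * (p * p ^ (ω - 1)) := by rw [← pow_succ', Nat.sub_add_cancel hω]
    _ = p * (q * p ^ (ω - 1)) := mul_left_comm _ _ _

end FullyRecurrent

lemma ncard_le_ncard_of_dvd {N H : Type*} [CommMonoid N] [Group H] [Finite H]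
    {τ : N → Set H} (hne : ∀ m : N, (τ m).Nonempty)
    (hmul : ∀ m m' : N, τ m * τ m' ⊆ τ (m * m')) {a b : N} (hab : a ∣ b) :
    (τ a).ncard ≤ (τ b).ncard := by
  obtain ⟨c, rfl⟩ := hab
  obtain ⟨g, hg⟩ := hne c
  calc (τ a).ncard = (τ a * {g}).ncard := by
        rw [Set.mul_singleton, Set.ncard_image_of_injective _ (mul_left_injective g)]
    _ ≤ (τ (a * c)).ncard :=
      Set.ncard_le_ncard ((Set.mul_subset_mul_left (Set.singleton_subset_iff.2 hg)).trans
        (hmul a c))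

theorem stmt17_general {N H : Type*} [CommMonoid N] [Group H] [Fintype H]
    (ω : ℕ) (hω : 1 ≤ ω) (hidem : ∀ p : N, p ^ (2 * ω) = p ^ ω)
    (τ : N → Set H)
    (hne : ∀ m : N, (τ m).Nonempty)
    (hmul : ∀ m m' : N, τ m * τ m' ⊆ τ (m * m'))
    (p q : N) (hp : FullyRecurrent ω p) (hq : FullyRecurrent ω q) :
    (τ p).ncard = (τ q).ncard :=
  le_antisymm (ncard_le_ncard_of_dvd hne hmul (hq.dvd hω hidem p))
    (ncard_le_ncard_of_dvd hne hmul (hp.dvd hω hidem q))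

/-- for any relational morphism `τ` from a finite commutative monoid `N`
to a finite group `H`, the images of any two fully recurrent elements of `N` have the
same cardinality. -/
theorem stmt17 {N H : Type*} [CommMonoid N] [Fintype N] [Group H] [Fintype H]
    (ω : ℕ) (hω : 1 ≤ ω) (hidem : ∀ p : N, p ^ (2 * ω) = p ^ ω)
    (τ : N → Set H)
    (hne : ∀ m : N, (τ m).Nonempty)
    (hmul : ∀ m m' : N, τ m * τ m' ⊆ τ (m * m'))
    (p q : N) (hp : FullyRecurrent ω p) (hq : FullyRecurrent ω q) :
    (τ p).ncard = (τ q).ncard :=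
  stmt17_general ω hω hidem τ hne hmul p q hp hq

end CTS
end

section
/- Let A be an alphabet, H a finite group, and μ : A^* → H a surjective monoid morphism. Then there exists a constant B ∈ ℕ such that for every n ∈ ℕ, every n-tuple of words w₁, …, wₙ over A, and every (n+1)-tuple of words w'₀, …, w'ₙ over A, setting u = w'₀ w₁ w'₁ w₂ w'₂ ⋯ wₙ w'ₙ, there exists a set J ⊆ {0, …, n} of cardinality at most B such that, defining w''ⱼ = w'ⱼ if j ∈ J and w''ⱼ = ε otherwise, and v = w''₀ w₁ w''₁ ⋯ wₙ w''ₙ, we have μ(u) = μ(v) and μ(w'₀ w'₁ ⋯ w'ₙ) = μ(w''₀ w''₁ ⋯ w''ₙ). -/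
/-!
Write `aᵢ = μ wᵢ`, `bⱼ = μ w'ⱼ` and `cⱼ = a₀ ⋯ aⱼ₋₁`. The interleaved product
`b₀ a₀ b₁ ⋯ aₙ₋₁ bₙ` equals `(∏ⱼ cⱼ bⱼ cⱼ⁻¹) cₙ`, so both products to be preserved are the
components of the single product `∏ⱼ (cⱼ bⱼ cⱼ⁻¹, bⱼ)` in `H × H`, and replacing `w'ⱼ` by `ε`
replaces its factor by `1`. In a finite monoid `M`, a product with more than `|M|` nontrivial
factors has two equal prefix products, so the factors between them can be replaced by `1`;
iterating leaves at most `|M|` factors, which gives `B = |H|²`.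
-/

namespace CTS

open List

theorem ofFn_eq_map_range {α : Type*} {n : ℕ} {f : Fin n → α} {g : ℕ → α}
    (h : ∀ i : Fin n, f i = g i) : ofFn f = (range n).map g := by
  rw [ofFn_eq_map, ← map_coe_finRange_eq_range, map_map]
  exact map_congr_left fun i _ => h i

section Monoid

variable {M : Type*} [Monoid M]

theorem prod_range_add (g : ℕ → M) (s d : ℕ) :
    ((range (s + d)).map g).prod =
      ((range s).map g).prod * ((range d).map fun i => g (s + i)).prod := by
  rw [range_add, map_append, prod_append, map_map]
  rfl

theorem prod_range_eq_of_eq_one_on_Ico {g g' : ℕ → M} {s t N : ℕ} (hst : s ≤ t) (htN : t ≤ N)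
    (hprefix : ((range s).map g).prod = ((range t).map g).prod)
    (hone : ∀ i, s ≤ i → i < t → g' i = 1) (heq : ∀ i, i < s ∨ t ≤ i → g' i = g i) :
    ((range N).map g').prod = ((range N).map g).prod := by
  obtain ⟨d, rfl⟩ := Nat.exists_eq_add_of_le hst
  obtain ⟨e, rfl⟩ := Nat.exists_eq_add_of_le htN
  have hs : ((range s).map g').prod = ((range s).map g).prod :=
    congrArg _ (map_congr_left fun i hi => heq i (.inl (mem_range.1 hi)))
  have hd : ((range d).map fun i => g' (s + i)).prod = 1 :=
    prod_eq_one <| by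
      simp only [mem_map, mem_range]
      rintro _ ⟨i, hi, rfl⟩
      exact hone _ (by omega) (by omega)
  have he : ((range e).map fun i => g' (s + d + i)).prod =
      ((range e).map fun i => g (s + d + i)).prod :=
    congrArg _ (map_congr_left fun i _ => heq _ (.inr (by omega)))
  rw [prod_range_add g' (s + d), prod_range_add g' s, hs, hd, mul_one, he,
    prod_range_add g (s + d), ← hprefix]

theorem exists_subset_card_le_prod_mulIndicator [Fintype M] (g : ℕ → M) {N : ℕ} (S : Finset ℕ)
    (hS : S ⊆ Finset.range N) :
    ∃ J ⊆ S, J.card ≤ Fintype.card M ∧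
      ((range N).map ((J : Set ℕ).mulIndicator g)).prod =
        ((range N).map ((S : Set ℕ).mulIndicator g)).prod := by
  induction S using Finset.strongInduction with
  | H S ih =>
  by_cases hcard : S.card ≤ Fintype.card M
  · exact ⟨S, subset_rfl, hcard, rfl⟩
  obtain ⟨s, hs, t, ht, hne, hprefix⟩ := Finset.exists_ne_map_eq_of_card_lt_of_maps_to
    (t := Finset.univ) (by simpa using hcard)
    (f := fun k => ((range k).map ((S : Set ℕ).mulIndicator g)).prod)
    (fun _ _ => Finset.mem_coe.2 (Finset.mem_univ _))
  wlog hst : s < t generalizing s t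
  · exact this t ht s hs hne.symm hprefix.symm (by omega)
  set S' := S.filter fun i => i < s ∨ t ≤ i
  have hS' : S' ⊂ S := Finset.filter_ssubset.2 ⟨s, hs, by omega⟩
  obtain ⟨J, hJ, hcardJ, hprod⟩ := ih S' hS' (hS'.subset.trans hS)
  refine ⟨J, hJ.trans hS'.subset, hcardJ, hprod.trans ?_⟩
  refine prod_range_eq_of_eq_one_on_Ico hst.le (Finset.mem_range.1 (hS ht)).le hprefix ?_ ?_
  · intro i hsi hit
    refine Set.mulIndicator_of_notMem ?_ g
    simp only [S', Finset.coe_filter, Set.mem_ofPred_eq, not_and]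
    omega
  · intro i hi
    simp [S', Set.mulIndicator_apply, hi]

end Monoid

section Group

variable {H : Type*} [Group H]

theorem interleave_eq_prod_conj (a b : ℕ → H) (n : ℕ) :
    b 0 * ((range n).map fun i => a i * b (i + 1)).prod =
      ((range (n + 1)).map fun j => ((range j).map a).prod * b j * ((range j).map a).prod⁻¹).prod
        * ((range n).map a).prod := by
  induction n with
  | zero => simp
  | succ n ih =>
    rw [prod_range_succ, ← mul_assoc, ih, prod_range_succ _ (n + 1), prod_range_succ a n]
    group

theorem exists_card_le_mulIndicator_interleave_range [Fintype H] (a b : ℕ → H) (n : ℕ) :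
    ∃ J ⊆ Finset.range (n + 1), J.card ≤ Fintype.card H ^ 2 ∧
      (J : Set ℕ).mulIndicator b 0 *
          ((range n).map fun i => a i * (J : Set ℕ).mulIndicator b (i + 1)).prod =
        b 0 * ((range n).map fun i => a i * b (i + 1)).prod ∧
      ((range (n + 1)).map ((J : Set ℕ).mulIndicator b)).prod = ((range (n + 1)).map b).prod := by
  set c : ℕ → H := fun j => ((range j).map a).prod
  set g : ℕ → H × H := fun j => (c j * b j * (c j)⁻¹, b j)
  have hg : ∀ J : Set ℕ,
      J.mulIndicator g = fun j => (c j * J.mulIndicator b j * (c j)⁻¹, J.mulIndicator b j) := by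
    intro J; funext j
    by_cases hj : j ∈ J <;> simp [hj, g, Prod.one_eq_mk]
  obtain ⟨J, hJ, hcard, hprod⟩ := exists_subset_card_le_prod_mulIndicator g _ subset_rfl
  have hrange : (range (n + 1)).map ((Finset.range (n + 1) : Set ℕ).mulIndicator g) =
      (range (n + 1)).map g :=
    map_congr_left fun i hi => Set.mulIndicator_of_mem (by simpa using hi) g
  rw [hrange, hg] at hprod
  refine ⟨J, hJ, by simpa [Fintype.card_prod, sq] using hcard, ?_, ?_⟩
  · rw [interleave_eq_prod_conj, interleave_eq_prod_conj]
    have hfst := congrArg (MonoidHom.fst H H) hprod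
    simp only [map_list_prod, map_map, MonoidHom.coe_fst, Function.comp_def] at hfst
    exact congrArg (· * c n) hfst
  · have hsnd := congrArg (MonoidHom.snd H H) hprod
    simpa only [map_list_prod, map_map, MonoidHom.coe_snd, Function.comp_def] using hsnd

def interleave {n : ℕ} (a : Fin n → H) (b : Fin (n + 1) → H) : H :=
  b 0 * (ofFn fun i => a i * b i.succ).prod

theorem interleave_eq_of_eq {n : ℕ} {a : Fin n → H} {b : Fin (n + 1) → H} {a' b' : ℕ → H}
    (ha : ∀ i : Fin n, a i = a' i) (hb : ∀ j : Fin (n + 1), b j = b' j) :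
    interleave a b = b' 0 * ((range n).map fun i => a' i * b' (i + 1)).prod := by
  rw [interleave, ofFn_eq_map_range (g := fun i => a' i * b' (i + 1))
    fun i => by rw [ha, hb, Fin.val_succ], hb 0]
  rfl

theorem exists_card_le_mulIndicator_interleave [Fintype H] {n : ℕ} (a : Fin n → H)
    (b : Fin (n + 1) → H) :
    ∃ J : Finset (Fin (n + 1)), J.card ≤ Fintype.card H ^ 2 ∧
      interleave a ((J : Set (Fin (n + 1))).mulIndicator b) = interleave a b ∧
      (ofFn ((J : Set (Fin (n + 1))).mulIndicator b)).prod = (ofFn b).prod := by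
  set a' : ℕ → H := fun i => if h : i < n then a ⟨i, h⟩ else 1
  set b' : ℕ → H := fun i => if h : i < n + 1 then b ⟨i, h⟩ else 1
  have ha : ∀ i : Fin n, a i = a' i := fun i => by simp only [a', dif_pos i.isLt, Fin.eta]
  have hb : ∀ j : Fin (n + 1), b j = b' j := fun j => by simp only [b', dif_pos j.isLt, Fin.eta]
  obtain ⟨J, hJ, hcard, hinter, hprod⟩ := exists_card_le_mulIndicator_interleave_range a' b' n
  have hJ' : ∀ m ∈ J, m < n + 1 := fun m hm => Finset.mem_range.1 (hJ hm)
  have hmask : ∀ j : Fin (n + 1),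
      (J.attachFin hJ' : Set (Fin (n + 1))).mulIndicator b j = (J : Set ℕ).mulIndicator b' j :=
    fun j => by simp only [Set.mulIndicator_apply, Finset.mem_coe, Finset.mem_attachFin, hb]
  refine ⟨J.attachFin hJ', by rwa [Finset.card_attachFin], ?_, ?_⟩
  · rwa [interleave_eq_of_eq ha hmask, interleave_eq_of_eq ha hb]
  · rwa [ofFn_eq_map_range hmask, ofFn_eq_map_range hb]

end Group

theorem apply_flatten {α H : Type*} [Monoid H] {μ : List α → H} (hone : μ [] = 1)
    (hmul : ∀ u v : List α, μ (u ++ v) = μ u * μ v) (L : List (List α)) :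
    μ L.flatten = (L.map μ).prod := by
  induction L with
  | nil => exact hone
  | cons u L ih => rw [flatten_cons, hmul, ih, map_cons, prod_cons]

theorem apply_interleave_flatten {α H : Type*} [Group H] {μ : List α → H} (hone : μ [] = 1)
    (hmul : ∀ u v : List α, μ (u ++ v) = μ u * μ v) {n : ℕ} (w : Fin n → List α)
    (w' : Fin (n + 1) → List α) :
    μ (w' 0 ++ (ofFn fun i : Fin n => w i ++ w' i.succ).flatten) =
      interleave (μ ∘ w) (μ ∘ w') := by
  simp only [interleave, hmul, apply_flatten hone hmul, map_ofFn, Function.comp_def]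

theorem stmt18_general {α H : Type*} [Group H] [Fintype H]
    (μ : List α → H) (hone : μ [] = 1)
    (hmul : ∀ u v : List α, μ (u ++ v) = μ u * μ v) :
    ∃ B : ℕ, ∀ (n : ℕ) (w : Fin n → List α) (w' : Fin (n + 1) → List α),
      ∃ J : Finset (Fin (n + 1)), J.card ≤ B ∧
        ∀ w'' : Fin (n + 1) → List α,
          (∀ j, w'' j = if j ∈ J then w' j else []) →
          μ (w' 0 ++ (List.ofFn fun i : Fin n => w i ++ w' i.succ).flatten) =
              μ (w'' 0 ++ (List.ofFn fun i : Fin n => w i ++ w'' i.succ).flatten) ∧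
            μ (List.ofFn w').flatten = μ (List.ofFn w'').flatten := by
  refine ⟨Fintype.card H ^ 2, fun n w w' => ?_⟩
  obtain ⟨J, hcard, hinter, hprod⟩ := exists_card_le_mulIndicator_interleave (μ ∘ w) (μ ∘ w')
  refine ⟨J, hcard, fun w'' hw'' => ?_⟩
  have hμw'' : μ ∘ w'' = (J : Set (Fin (n + 1))).mulIndicator (μ ∘ w') := by
    funext j
    simp only [Function.comp_apply, hw'', apply_ite μ, hone, Set.mulIndicator_apply,
      Finset.mem_coe]
  rw [apply_interleave_flatten hone hmul, apply_interleave_flatten hone hmul, hμw'', hinter,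
    apply_flatten hone hmul, apply_flatten hone hmul, map_ofFn, map_ofFn, hμw'', hprod]
  exact ⟨rfl, rfl⟩

/-- insertion lemma: for a surjective morphism `μ : A^* → H` onto a finite
group, there is a constant `B` such that, given words `w₁, …, wₙ` and insertions
`w'₀, …, w'ₙ`, one can keep at most `B` of the insertions (emptying the others) without
changing the `μ`-image of the full interleaving nor that of the concatenated insertions. -/
theorem stmt18 {α H : Type*} [Group H] [Fintype H]
    (μ : List α → H) (hone : μ [] = 1)
    (hmul : ∀ u v : List α, μ (u ++ v) = μ u * μ v)
    (hsurj : Function.Surjective μ) :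
    ∃ B : ℕ, ∀ (n : ℕ) (w : Fin n → List α) (w' : Fin (n + 1) → List α),
      ∃ J : Finset (Fin (n + 1)), J.card ≤ B ∧
        ∀ w'' : Fin (n + 1) → List α,
          (∀ j, w'' j = if j ∈ J then w' j else []) →
          μ (w' 0 ++ (List.ofFn fun i : Fin n => w i ++ w' i.succ).flatten) =
              μ (w'' 0 ++ (List.ofFn fun i : Fin n => w i ++ w'' i.succ).flatten) ∧
            μ (List.ofFn w').flatten = μ (List.ofFn w'').flatten :=
  stmt18_general μ hone hmul

end CTS
end

section
/- Let A be a finite alphabet, H a finite group, and μ : A^* → H a surjective monoid morphism. For every integer k > 0 there exists an integer n_k such that the following holds: for every finite A-labeled DAG G = (V, ≤, ℓ) containing an n_k-rich antichain and for all elements g₁, …, g_k of H, if there exists a word w over A with μ(w) = g₁ ⋯ g_k and such that, for every letter a ∈ A, |w|_a equals the number of vertices of V labeled a, then there is a topological sort σ of V and a decomposition of σ as a concatenation σ = σ₁ σ₂ ⋯ σ_k such that μ(wᵢ) = gᵢ for each 1 ≤ i ≤ k, where wᵢ is the word achieved by σᵢ. -/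
/-!
Let `m = |H|` and evaluate words through `μ`. If two words have the same letter counts modulo `m`,
their values differ by the value of a word all of whose letter counts are multiples of `m`, and
since `H` is finite that word can be taken of bounded length. The value of a sorted word
`a₁^c₁ ⋯ a_r^c_r` only depends on the `cᵢ` modulo `m`. Together: a word containing every letter
often enough can be rearranged to take any value allowed by its letter counts modulo `m`. Peeling
off short words of prescribed values `g₁, …, g_{k-1}` and rearranging the rest for `g_k` cuts a
rearrangement of it into `k` factors of values `g₁, …, g_k`.

In the DAG, list first the vertices not weakly above any element of the rich antichain `C`, then
`C` in any order, then the remaining vertices: this is a topological sort whatever the order of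
`C`, so the labels of `C` can be rearranged and cut as above, the outer blocks being absorbed by
the first and last factors.
-/

namespace CTS

section Words

variable {A : Type*}

def parikhMod [DecidableEq A] (m : ℕ) (w : List A) : A → ZMod m := fun a => (w.count a : ZMod m)

@[simp] theorem parikhMod_append [DecidableEq A] (m : ℕ) (u v : List A) :
    parikhMod m (u ++ v) = parikhMod m u + parikhMod m v := by
  ext a; simp [parikhMod]

theorem parikhMod_eq_of_perm [DecidableEq A] (m : ℕ) {u v : List A} (h : u.Perm v) :
    parikhMod m u = parikhMod m v := by
  ext a; simp [parikhMod, h.count_eq]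

def invWord (m : ℕ) (u : List A) : List A := (List.replicate (m - 1) u).flatten

theorem parikhMod_invWord [DecidableEq A] {m : ℕ} (hm : 0 < m) (u : List A) :
    parikhMod m (invWord m u) = -parikhMod m u := by
  ext a; simp [parikhMod, invWord, List.count_flatten, Nat.cast_pred hm]

theorem prod_map_invWord {H : Type*} [Group H] [Fintype H] (f : A → H) (u : List A) :
    ((invWord (Fintype.card H) u).map f).prod = (u.map f).prod⁻¹ := by
  rw [invWord, List.map_flatten, List.prod_flatten, List.map_replicate, List.map_replicate,
    List.prod_replicate]
  exact eq_inv_of_mul_eq_one_left (by rw [pow_sub_one_mul Fintype.card_ne_zero, pow_card_eq_one])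

noncomputable def canonicalWord [Fintype A] (c : A → ℕ) : List A :=
  (Finset.univ.toList.map fun a => List.replicate (c a) a).flatten

@[simp] theorem count_canonicalWord [Fintype A] [DecidableEq A] (c : A → ℕ) (a : A) :
    (canonicalWord c).count a = c a := by
  simp [canonicalWord, List.count_flatten, List.count_replicate, Function.comp_def]

theorem canonicalWord_count_perm [Fintype A] [DecidableEq A] (w : List A) :
    (canonicalWord fun a => w.count a).Perm w :=
  List.perm_iff_count.2 fun a => count_canonicalWord _ a

theorem prod_map_canonicalWord_congr [Fintype A] {H : Type*} [Group H] [Fintype H] (f : A → H)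
    {c c' : A → ℕ} (h : ∀ a, (c a : ZMod (Fintype.card H)) = c' a) :
    ((canonicalWord c).map f).prod = ((canonicalWord c').map f).prod := by
  simp only [canonicalWord, List.map_flatten, List.prod_flatten, List.map_map]
  congr 1
  refine List.map_congr_left fun a _ => ?_
  simp only [Function.comp_apply, List.map_replicate, List.prod_replicate]
  rw [← pow_mod_card, ← pow_mod_card (f a) (c' a), (ZMod.natCast_eq_natCast_iff' _ _ _).1 (h a)]

theorem exists_length_le_of_finite {α β : Type*} [Finite β] (F : List α → β) (S : Set (List α)) :
    ∃ N, ∀ v ∈ S, ∃ v' ∈ S, v'.length ≤ N ∧ F v' = F v := by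
  choose rep hrepS hrepF using fun b : F '' S => b.2
  obtain ⟨N, hN⟩ := Finite.bddAbove_range fun b => (rep b).length
  exact ⟨N, fun v hv => ⟨rep ⟨F v, v, hv, rfl⟩, hrepS _, hN ⟨_, rfl⟩, hrepF _⟩⟩

section Group

variable [DecidableEq A] {H : Type*} [Group H] [Fintype H] (f : A → H)

theorem exists_short_mul_eq_of_parikhMod_eq :
    ∃ N, ∀ u u' : List A, parikhMod (Fintype.card H) u = parikhMod (Fintype.card H) u' →
      ∃ v, parikhMod (Fintype.card H) v = 0 ∧ v.length ≤ N ∧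
        (u.map f).prod = (v.map f).prod * (u'.map f).prod := by
  obtain ⟨N, hN⟩ :=
    exists_length_le_of_finite (fun v => (v.map f).prod) {v | parikhMod (Fintype.card H) v = 0}
  refine ⟨N, fun u u' h => ?_⟩
  obtain ⟨v, hv0, hvN, hv⟩ := hN (u ++ invWord (Fintype.card H) u') <| show _ = _ by
    rw [parikhMod_append, parikhMod_invWord Fintype.card_pos, h, add_neg_cancel]
  refine ⟨v, hv0, hvN, ?_⟩
  simp [hv, prod_map_invWord]

theorem exists_perm_prod_eq [Fintype A] :
    ∃ N, ∀ p w s W : List A, (∀ a, N ≤ w.count a) →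
      parikhMod (Fintype.card H) W = parikhMod (Fintype.card H) (p ++ w ++ s) →
      ∃ w', w'.Perm w ∧ ((p ++ w' ++ s).map f).prod = (W.map f).prod := by
  obtain ⟨N, hN⟩ := exists_short_mul_eq_of_parikhMod_eq f
  refine ⟨N, fun p w s W hw hW => ?_⟩
  have hpm : parikhMod (Fintype.card H)
      (invWord (Fintype.card H) p ++ W ++ invWord (Fintype.card H) s) =
      parikhMod (Fintype.card H) (canonicalWord fun a => w.count a) := by
    rw [parikhMod_eq_of_perm _ (canonicalWord_count_perm w)]
    simp only [parikhMod_append, parikhMod_invWord Fintype.card_pos, hW]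
    abel
  obtain ⟨v, hv0, hvN, hv⟩ := hN _ _ hpm
  -- the letters of the correcting word `v` are taken out of the sorted word, which keeps its value
  -- because the letter counts of `v` are multiples of `|H|`
  have hvw : ∀ a, v.count a ≤ w.count a := fun a => List.count_le_length.trans (hvN.trans (hw a))
  refine ⟨v ++ canonicalWord fun a => w.count a - v.count a, List.perm_iff_count.2 fun a => ?_, ?_⟩
  · simp only [List.count_append, count_canonicalWord]
    have := hvw a
    omega
  · have hc : ((canonicalWord fun a => w.count a - v.count a).map f).prod =
        ((canonicalWord fun a => w.count a).map f).prod :=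
      prod_map_canonicalWord_congr f fun a => by
        rw [Nat.cast_sub (hvw a), show (v.count a : ZMod (Fintype.card H)) = 0 from congrFun hv0 a,
          sub_zero]
    simp only [List.map_append, List.prod_append, prod_map_invWord] at hv ⊢
    rw [hc, ← hv]
    group

theorem exists_perm_flatten_eq [Fintype A] (hf : ∀ h : H, ∃ w : List A, (w.map f).prod = h)
    (k : ℕ) :
    ∃ N, ∀ (p w s W : List A) (g : Fin (k + 1) → H), (∀ a, N ≤ w.count a) →
      parikhMod (Fintype.card H) W = parikhMod (Fintype.card H) (p ++ w ++ s) →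
      (W.map f).prod = (List.ofFn g).prod →
      ∃ w', w'.Perm w ∧ ∃ u : Fin (k + 1) → List A,
        (List.ofFn u).flatten = p ++ w' ++ s ∧ ∀ i, ((u i).map f).prod = g i := by
  induction k with
  | zero =>
    obtain ⟨N, hN⟩ := exists_perm_prod_eq f
    refine ⟨N, fun p w s W g hw hW hg => ?_⟩
    obtain ⟨w', hw', hprod⟩ := hN p w s W hw hW
    refine ⟨w', hw', fun _ => p ++ w' ++ s, by simp, fun i => ?_⟩
    rw [hprod, hg, Fin.fin_one_eq_zero i, List.ofFn_succ, List.ofFn_zero, List.prod_singleton]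
  | succ k ih =>
    obtain ⟨N, hN⟩ := ih
    obtain ⟨M, hM⟩ := exists_length_le_of_finite (fun v => (v.map f).prod) Set.univ
    refine ⟨N + M, fun p w s W g hw hW hg => ?_⟩
    -- the first factor is `p ++ r` for a short word `r` taken out of `w`; the rest is recursed on
    obtain ⟨r₀, hr₀⟩ := hf ((p.map f).prod⁻¹ * g 0)
    obtain ⟨r, -, hrM, hr⟩ := hM r₀ trivial
    have hrw : ∀ a, r.count a + N ≤ w.count a := fun a => by
      have := List.count_le_length (a := a) (l := r)
      have := hw a
      omega
    have hperm : (r ++ w.diff r).Perm w :=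
      List.subperm_append_diff_self_of_count_le fun a _ => by have := hrw a; omega
    have hcount : ∀ a, (w.diff r).count a = w.count a - r.count a := fun a => by
      have := hperm.count_eq a
      rw [List.count_append] at this
      omega
    obtain ⟨w₂, hw₂, u, hu, hug⟩ := hN [] (w.diff r) s (invWord (Fintype.card H) (p ++ r) ++ W)
      (fun i => g i.succ) (fun a => by have := hrw a; rw [hcount]; omega)
      (by
        simp only [parikhMod_append, parikhMod_invWord Fintype.card_pos, hW,
          ← parikhMod_eq_of_perm _ hperm, List.nil_append]
        abel)
      (by
        simp only [List.map_append, List.prod_append, prod_map_invWord, hg, hr, hr₀,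
          List.ofFn_succ, List.prod_cons]
        group)
    refine ⟨r ++ w₂, (hw₂.append_left r).trans hperm, Fin.cons (p ++ r) u, ?_, fun i => ?_⟩
    · rw [List.ofFn_cons, List.flatten_cons, hu]
      simp
    · cases i using Fin.cases with
      | zero => simp [hr, hr₀]
      | succ i => simp [hug]

end Group

theorem eq_prod_map_singleton {M : Type*} [Monoid M] (μ : List A → M) (hone : μ [] = 1)
    (hmul : ∀ u v : List A, μ (u ++ v) = μ u * μ v) (w : List A) :
    μ w = (w.map fun a => μ [a]).prod := by
  induction w with
  | nil => exact hone
  | cons a w ih => rw [← List.singleton_append, hmul, ih]; rfl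

end Words

theorem exists_perm_map_eq_of_perm {α β : Type*} {f : α → β} {l : List α} {w : List β}
    (h : (l.map f).Perm w) : ∃ l' : List α, l'.Perm l ∧ l'.map f = w := by
  classical
  induction w generalizing l with
  | nil => exact ⟨[], by simpa using h.symm, rfl⟩
  | cons b w ih =>
    obtain ⟨x, hx, rfl⟩ := List.mem_map.1 (h.symm.subset List.mem_cons_self)
    have hl := List.perm_cons_erase hx
    obtain ⟨l', hl', rfl⟩ := ih ((List.perm_cons _).1 ((hl.map f).symm.trans h))
    exact ⟨x :: l', (hl'.cons x).trans hl.symm, rfl⟩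

theorem exists_flatten_ofFn_eq_of_map_eq {α β : Type*} {f : α → β} :
    ∀ {k : ℕ} {u : Fin k → List β} {L : List α}, L.map f = (List.ofFn u).flatten →
      ∃ σs : Fin k → List α, (List.ofFn σs).flatten = L ∧ ∀ i, (σs i).map f = u i
  | 0, u, L, h => ⟨Fin.elim0, by simpa using h.symm, fun i => i.elim0⟩
  | k + 1, u, L, h => by
    rw [List.ofFn_succ, List.flatten_cons] at h
    obtain ⟨l₁, l₂, rfl, h₁, h₂⟩ := List.map_eq_append_iff.1 h
    obtain ⟨σs, hσs, hσ⟩ := exists_flatten_ofFn_eq_of_map_eq h₂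
    refine ⟨Fin.cons l₁ σs, by rw [List.ofFn_cons, List.flatten_cons, hσs], fun i => ?_⟩
    cases i using Fin.cases with
    | zero => exact h₁
    | succ i => exact hσ i

theorem count_map_toList {α β : Type*} [DecidableEq β] (s : Finset α) (ℓ : α → β) (b : β) :
    (s.toList.map ℓ).count b = (s.filter fun x => ℓ x = b).card := by
  rw [← Multiset.coe_count, ← Multiset.map_coe, Finset.coe_toList, Multiset.count_map]
  simp [Finset.card_def, Finset.filter_val, eq_comm]

theorem exists_isTopSort_s19 (V : Type*) [Fintype V] [PartialOrder V] : ∃ τ : List V, IsTopSort τ := by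
  classical
  obtain ⟨s, _, hle⟩ := extend_partialOrder ((· ≤ ·) : V → V → Prop)
  have hperm := List.perm_insertionSort s Finset.univ.toList
  refine ⟨Finset.univ.toList.insertionSort s, hperm.nodup_iff.2 (Finset.nodup_toList _),
    fun v => hperm.mem_iff.2 (Finset.mem_toList.2 (Finset.mem_univ v)), ?_⟩
  exact (List.pairwise_insertionSort s _).imp fun {u v} huv hvu =>
    hvu.ne (antisymm (hle _ _ hvu.le) huv)

theorem IsTopSort.count_map {V β : Type*} [Fintype V] [PartialOrder V] [DecidableEq β] {σ : List V}
    (hσ : IsTopSort σ) (ℓ : V → β) (b : β) :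
    (σ.map ℓ).count b = (Finset.univ.filter fun v => ℓ v = b).card := by
  have hperm : σ.Perm Finset.univ.toList :=
    (List.perm_ext_iff_of_nodup hσ.1 (Finset.nodup_toList _)).2 fun v => by simp [hσ.2.1 v]
  rw [(hperm.map ℓ).count_eq, count_map_toList]

theorem exists_isTopSort_append_of_isAntichain {V : Type*} [Fintype V] [PartialOrder V]
    {C : Finset V} (hC : IsAntichain (· ≤ ·) (C : Set V)) :
    ∃ dl ul : List V, ∀ L : List V, L.Perm C.toList → IsTopSort (dl ++ L ++ ul) := by
  classical
  obtain ⟨τ, hτnd, hτall, hτsort⟩ := exists_isTopSort_s19 V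
  refine ⟨τ.filter fun x => ∀ c ∈ C, ¬ c ≤ x, τ.filter fun x => x ∉ C ∧ ∃ c ∈ C, c ≤ x,
    fun L hL => ?_⟩
  have hLC : ∀ x, x ∈ L ↔ x ∈ C := fun x => by simp [hL.mem_iff]
  have hτ : τ.Pairwise fun u v => u ≠ v ∧ ¬ v < u := hτnd.and hτsort
  have hL : L.Pairwise fun u v => u ≠ v ∧ ¬ v < u :=
    (hL.nodup_iff.2 C.nodup_toList).pairwise_of_forall_ne fun a ha b hb hab =>
      ⟨hab, fun hba => hC ((hLC b).1 hb) ((hLC a).1 ha) hba.ne hba.le⟩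
  have hbelow : ∀ a b, (∀ c ∈ C, ¬ c ≤ a) → (∃ c ∈ C, c ≤ b) → a ≠ b ∧ ¬ b < a :=
    fun a b ha ⟨c, hc, hcb⟩ =>
      ⟨fun hab => ha c hc (hab ▸ hcb), fun hba => ha c hc (hcb.trans hba.le)⟩
  have hsorted : (τ.filter (fun x => ∀ c ∈ C, ¬ c ≤ x) ++ L ++
      τ.filter fun x => x ∉ C ∧ ∃ c ∈ C, c ≤ x).Pairwise fun u v => u ≠ v ∧ ¬ v < u := by
    simp only [List.pairwise_append, List.mem_append, List.mem_filter, decide_eq_true_eq]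
    refine ⟨⟨hτ.filter _, hL, fun a ha b hb => hbelow a b ha.2 ⟨b, (hLC b).1 hb, le_rfl⟩⟩,
      hτ.filter _, ?_⟩
    rintro a (ha | ha) b ⟨-, hbC, c, hc, hcb⟩
    · exact hbelow a b ha.2 ⟨c, hc, hcb⟩
    · have haC := (hLC a).1 ha
      exact ⟨fun hab => hbC (hab ▸ haC),
        fun hba => hC hc haC (hcb.trans_lt hba).ne (hcb.trans hba.le)⟩
  refine ⟨hsorted.imp And.left, fun v => ?_, hsorted.imp And.right⟩
  simp only [List.mem_append, List.mem_filter, decide_eq_true_eq, hLC, hτall, true_and]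
  by_cases hD : ∀ c ∈ C, ¬ c ≤ v
  · exact Or.inl (Or.inl hD)
  · push Not at hD
    tauto

/-- antichain lemma: for a surjective morphism `μ : A^* → H` onto a finite
group, for every `k > 0` there is `n_k` such that any finite `A`-labeled DAG with an
`n_k`-rich antichain whose Parikh image is that of some word mapping to `g₁ ⋯ g_k` admits
a topological sort splitting as `σ₁ ⋯ σ_k` with `μ` of the word achieved by `σᵢ` equal
to `gᵢ`. -/
theorem stmt19 {A : Type} [Fintype A] [DecidableEq A] {H : Type} [Group H] [Fintype H]
    (μ : List A → H) (hone : μ [] = 1)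
    (hmul : ∀ u v : List A, μ (u ++ v) = μ u * μ v)
    (hsurj : Function.Surjective μ) :
    ∀ k : ℕ, 0 < k → ∃ nk : ℕ,
      ∀ (V : Type) [Fintype V] [PartialOrder V] (ℓ : V → A),
        (∃ C : Finset V, IsAntichain (· ≤ ·) (C : Set V) ∧
          ∀ a : A, nk ≤ (C.filter fun v => ℓ v = a).card) →
        ∀ g : Fin k → H,
          (∃ w : List A, μ w = (List.ofFn g).prod ∧
            ∀ a : A, w.count a = (Finset.univ.filter fun v : V => ℓ v = a).card) →
          ∃ σs : Fin k → List V,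
            IsTopSort (List.ofFn σs).flatten ∧ ∀ i, μ ((σs i).map ℓ) = g i := by
  rintro _ hk
  obtain ⟨k, rfl⟩ := Nat.exists_eq_add_one_of_ne_zero hk.ne'
  have hμ := eq_prod_map_singleton μ hone hmul
  obtain ⟨N, hN⟩ := exists_perm_flatten_eq (fun a => μ [a])
    (fun h => (hsurj h).imp fun w hw => (hμ w).symm.trans hw) k
  refine ⟨N, fun V _ _ ℓ ⟨C, hC, hrich⟩ g ⟨w, hw, hcount⟩ => ?_⟩
  obtain ⟨dl, ul, hsort⟩ := exists_isTopSort_append_of_isAntichain hC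
  have hperm : w.Perm (dl.map ℓ ++ C.toList.map ℓ ++ ul.map ℓ) := by
    rw [List.perm_iff_count]
    intro a
    rw [hcount, ← List.map_append, ← List.map_append, (hsort _ (List.Perm.refl _)).count_map]
  obtain ⟨w', hw', u, hu, hug⟩ := hN (dl.map ℓ) (C.toList.map ℓ) (ul.map ℓ) w g
    (fun a => (count_map_toList C ℓ a).symm ▸ hrich a) (parikhMod_eq_of_perm _ hperm)
    ((hμ w).symm.trans hw)
  obtain ⟨L, hL, rfl⟩ := exists_perm_map_eq_of_perm hw'.symm
  obtain ⟨σs, hσs, hσ⟩ := exists_flatten_ofFn_eq_of_map_eq (L := dl ++ L ++ ul) (f := ℓ)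
    (by rw [hu, List.map_append, List.map_append])
  exact ⟨σs, hσs ▸ hsort L hL, fun i => by rw [hμ, hσ, hug]⟩

end CTS
end
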